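/- Let H and K be finite groups with outer actions on the hyperfinite II₁ factor R, and let G = H ∗ K / (Int R ∩ H ∗ K) be the image of the free product H ∗ K in Out R. Then for any free ultrafilter ω, the central sequence algebra (R^H)^ω ∩ (R ⋊ K)' of the Bisch–Haagerup subfactor R^H ⊂ R ⋊ K is contained in (R_ω)^G, the fixed points of the induced pointwise action of G on R_ω. -/

import Mathlib

open scoped ENNReal

noncomputable section

section Base

variable {M : Type*} [NormedRing M] [StarRing M] [CStarRing M] [NormedAlgebra ℂ M] [StarModule ℂ M] [PartialOrder M] [StarOrderedRing M] [CompleteSpace M]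

/-- A faithful normalized tracial state (the trace of a finite von Neumann algebra). -/
structure IsTracialState (tr : M →ₗ[ℂ] ℂ) : Prop where
  map_one : tr 1 = 1
  tr_comm : ∀ x y : M, tr (x * y) = tr (y * x)
  pos : ∀ x : M, 0 ≤ x → ∃ r : ℝ, 0 ≤ r ∧ tr x = (r : ℂ)
  faithful : ∀ x : M, 0 ≤ x → tr x = 0 → x = 0
  norm_le : ∀ x : M, ‖tr x‖ ≤ ‖x‖

/-- The trace 2-norm `‖x‖₂ = √(tr (x* x))`. -/
def nrm2 (tr : M →ₗ[ℂ] ℂ) (x : M) : ℝ := Real.sqrt ((tr (star x * x)).re)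

/-- The commutant of a subset. -/
def commutantSet (S : Set M) : Set M := {x | ∀ s ∈ S, s * x = x * s}

/-- The relative commutant `A' ∩ B`. -/
def relCommSet (A B : Set M) : Set M := {x | x ∈ B ∧ ∀ a ∈ A, a * x = x * a}

/-- The center of a subset: elements of `S` commuting with all of `S`. -/
def centerSet (S : Set M) : Set M := {x | x ∈ S ∧ ∀ y ∈ S, x * y = y * x}

/-- `S` is a (sub)factor: its relative center consists of scalars. -/
def IsSubFactorSet (S : Set M) : Prop :=
  ∀ z ∈ S, (∀ y ∈ S, z * y = y * z) → ∃ c : ℂ, z = algebraMap ℂ M c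

/-- A trace-preserving conditional expectation onto the subalgebra (set) `A`. -/
structure IsCondExp (tr : M →ₗ[ℂ] ℂ) (A : Set M) (E : M →ₗ[ℂ] M) : Prop where
  mem : ∀ x : M, E x ∈ A
  fix : ∀ x ∈ A, E x = x
  bimod : ∀ a ∈ A, ∀ b ∈ A, ∀ x : M, E (a * x * b) = a * E x * b
  pos : ∀ x : M, 0 ≤ x → 0 ≤ E x
  map_star : ∀ x : M, E (star x) = star (E x)
  trace_eq : ∀ x : M, tr (E x) = tr x

/-- The Pimsner–Popa index `[B : A]` of an inclusion `A ⊆ B`, computed from the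
trace-preserving conditional expectation `E` onto `A`: the reciprocal of the best
constant `λ` such that `λ • x ≤ E x` for every positive `x ∈ B`. -/
def ppIndex (E : M →ₗ[ℂ] M) (B : Set M) : ℝ≥0∞ :=
  (⨆ (l : NNReal) (_ : ∀ x ∈ B, 0 ≤ x → (((l : ℝ) : ℂ)) • x ≤ E x), (l : ℝ≥0∞))⁻¹

/-- A II₁ factor: an infinite-dimensional factor with a faithful tracial state. -/
structure IsII1Factor (tr : M →ₗ[ℂ] ℂ) : Prop where
  tracial : IsTracialState tr
  factor : ∀ z : M, (∀ y : M, z * y = y * z) → ∃ c : ℂ, z = algebraMap ℂ M c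
  infiniteDimensional : ¬ FiniteDimensional ℂ M

/-- Hyperfiniteness of `S`: an increasing chain of finite-dimensional *-subalgebras
contained in `S` whose union is `‖·‖₂`-dense in `S`. -/
def IsHyperfiniteSet (tr : M →ₗ[ℂ] ℂ) (S : Set M) : Prop :=
  ∃ B : ℕ → StarSubalgebra ℂ M, Monotone B ∧ (∀ n, FiniteDimensional ℂ ↥(B n)) ∧
    (∀ n, (B n : Set M) ⊆ S) ∧
    ∀ x ∈ S, ∀ ε : ℝ, 0 < ε → ∃ n, ∃ y ∈ B n, nrm2 tr (x - y) < ε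

/-- A bounded sequence. -/
def BddSeq (x : ℕ → M) : Prop := ∃ C : ℝ, ∀ n, ‖x n‖ ≤ C

/-- A free ultrafilter on ℕ: one containing all cofinite sets. -/
def IsFreeUltrafilter (ω : Ultrafilter ℕ) : Prop := (ω : Filter ℕ) ≤ Filter.cofinite

variable {N : Type*} [NormedRing N] [StarRing N] [CStarRing N] [NormedAlgebra ℂ N] [StarModule ℂ N] [PartialOrder N] [StarOrderedRing N] [CompleteSpace N]

/-- `π` presents `N` as the tracial ultrapower `M^ω`: the quotient of the algebra of
bounded sequences in `M` by the ideal of sequences with `‖·‖₂ → 0` along `ω`. -/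
structure IsUltrapower (ω : Ultrafilter ℕ) (trM : M →ₗ[ℂ] ℂ) (trN : N →ₗ[ℂ] ℂ)
    (π : (ℕ → M) → N) : Prop where
  map_add : ∀ x y : ℕ → M, BddSeq x → BddSeq y → π (fun n => x n + y n) = π x + π y
  map_mul : ∀ x y : ℕ → M, BddSeq x → BddSeq y → π (fun n => x n * y n) = π x * π y
  map_smul : ∀ (c : ℂ) (x : ℕ → M), BddSeq x → π (fun n => c • x n) = c • π x
  map_star : ∀ x : ℕ → M, BddSeq x → π (fun n => star (x n)) = star (π x)
  map_one : π (fun _ => 1) = 1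
  norm_le : ∀ (x : ℕ → M) (C : ℝ), (∀ n, ‖x n‖ ≤ C) → ‖π x‖ ≤ C
  trace_tendsto : ∀ x : ℕ → M, BddSeq x →
    Filter.Tendsto (fun n => trM (x n)) (ω : Filter ℕ) (nhds (trN (π x)))
  eq_iff : ∀ x y : ℕ → M, BddSeq x → BddSeq y →
    (π x = π y ↔ Filter.Tendsto (fun n => nrm2 trM (x n - y n)) (ω : Filter ℕ) (nhds 0))
  surj : ∀ z : N, ∃ x : ℕ → M, BddSeq x ∧ π x = z

/-- The canonical embedding of `M` into the ultrapower, via constant sequences. -/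
def uConst (π : (ℕ → M) → N) (a : M) : N := π (fun _ => a)

/-- The image `S^ω` in the ultrapower of the bounded sequences with entries in `S`. -/
def uSet (π : (ℕ → M) → N) (S : Set M) : Set N :=
  {z | ∃ x : ℕ → M, BddSeq x ∧ (∀ n, x n ∈ S) ∧ π x = z}

end Base

/-!
A central sequence `y` of `R^H ⊂ R ⋊ K` has a representative with `H`-fixed entries, so every
`αH h` fixes it; and on `R` the automorphism `αK k` is conjugation by the unitary `uK k`, which
commutes with `y`, so every `αK k` fixes it too. A trace-preserving *-automorphism preserves
`‖·‖₂`-distances between sequences, hence acts on classes of the ultrapower, so the automorphisms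
fixing `y` form a subgroup, which therefore contains the group generated by the `αH h` and `αK k`.
Inner perturbations by unitaries of `R` do not move `y` either, as `y` commutes with `R`.
-/

section CStarAlgebra

variable {A B : Type*} [NormedRing A] [StarRing A] [CStarRing A] [NormedAlgebra ℂ A]
  [StarModule ℂ A] [CompleteSpace A] [NormedRing B] [StarRing B] [CStarRing B]
  [NormedAlgebra ℂ B] [StarModule ℂ B] [CompleteSpace B]

-- The unbundled instances assemble into `CStarAlgebra`, where Mathlib's norm lemmas live.

theorem StarAlgHom.norm_apply_le (θ : A →⋆ₐ[ℂ] B) (a : A) : ‖θ a‖ ≤ ‖a‖ := by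
  let _ : CStarAlgebra A := {}
  let _ : CStarAlgebra B := {}
  exact NonUnitalStarAlgHom.norm_apply_le θ a

theorem StarAlgHom.norm_map_of_injective (θ : A →⋆ₐ[ℂ] B) (hθ : Function.Injective θ) (a : A) :
    ‖θ a‖ = ‖a‖ := by
  let _ : CStarAlgebra A := {}
  let _ : CStarAlgebra B := {}
  exact NonUnitalStarAlgHom.norm_map θ hθ a

theorem AlgEquiv.norm_map_of_map_star (β : A ≃ₐ[ℂ] A) (hβ : ∀ a, β (star a) = star (β a))
    (a : A) : ‖β a‖ = ‖a‖ := by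
  let _ : CStarAlgebra A := {}
  exact StarAlgEquiv.norm_map (StarAlgEquiv.ofAlgEquiv β hβ) a

end CStarAlgebra

section Bounded

variable {M M' : Type*} [NormedRing M] [NormedRing M']

theorem BddSeq.const (a : M) : BddSeq (fun _ : ℕ => a) :=
  ⟨‖a‖, fun _ => le_rfl⟩

theorem BddSeq.mul {x y : ℕ → M} (hx : BddSeq x) (hy : BddSeq y) :
    BddSeq (fun n => x n * y n) := by
  obtain ⟨C, hC⟩ := hx
  obtain ⟨D, hD⟩ := hy
  refine ⟨C * D, fun n => (norm_mul_le _ _).trans ?_⟩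
  exact mul_le_mul (hC n) (hD n) (norm_nonneg _) ((norm_nonneg _).trans (hC 0))

theorem BddSeq.map {f : M → M'} (hf : ∀ a, ‖f a‖ ≤ ‖a‖) {x : ℕ → M} (hx : BddSeq x) :
    BddSeq (fun n => f (x n)) := by
  obtain ⟨C, hC⟩ := hx
  exact ⟨C, fun n => (hf _).trans (hC n)⟩

theorem BddSeq.of_map {f : M → M'} (hf : ∀ a, ‖a‖ ≤ ‖f a‖) {x : ℕ → M}
    (hx : BddSeq (fun n => f (x n))) : BddSeq x := by
  obtain ⟨C, hC⟩ := hx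
  exact ⟨C, fun n => (hf _).trans (hC n)⟩

end Bounded

def tracialStarAut {M : Type*} [Semiring M] [Star M] [Algebra ℂ M] (tr : M →ₗ[ℂ] ℂ) :
    Subgroup (M ≃ₐ[ℂ] M) where
  carrier := {β | (∀ a, β (star a) = star (β a)) ∧ ∀ a, tr (β a) = tr a}
  mul_mem' := by
    rintro β γ ⟨hβs, hβt⟩ ⟨hγs, hγt⟩
    exact ⟨fun a => by rw [AlgEquiv.mul_apply, AlgEquiv.mul_apply, hγs, hβs],
      fun a => by rw [AlgEquiv.mul_apply, hβt, hγt]⟩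
  one_mem' := ⟨fun _ => rfl, fun _ => rfl⟩
  inv_mem' := by
    rintro β ⟨hs, ht⟩
    refine ⟨fun a => β.injective ?_, fun a => ?_⟩
    · simp only [AlgEquiv.aut_inv, AlgEquiv.apply_symm_apply, hs]
    · rw [← ht, AlgEquiv.aut_inv, AlgEquiv.apply_symm_apply]

theorem nrm2_map {M M' : Type*} [NormedRing M] [StarRing M] [NormedAlgebra ℂ M] [NormedRing M']
    [StarRing M'] [NormedAlgebra ℂ M'] {F : Type*} [FunLike F M M'] [MulHomClass F M M']
    {tr : M →ₗ[ℂ] ℂ} {tr' : M' →ₗ[ℂ] ℂ} (f : F) (hstar : ∀ a, f (star a) = star (f a))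
    (htr : ∀ a, tr' (f a) = tr a) (a : M) : nrm2 tr' (f a) = nrm2 tr a := by
  rw [nrm2, nrm2, ← hstar, ← map_mul, htr]

namespace IsUltrapower

variable {M : Type*} [NormedRing M] [StarRing M] [NormedAlgebra ℂ M]
variable {N : Type*} [NormedRing N] [StarRing N] [NormedAlgebra ℂ N]
variable {ω : Ultrafilter ℕ} {trM : M →ₗ[ℂ] ℂ} {trN : N →ₗ[ℂ] ℂ} {π : (ℕ → M) → N}

theorem eq_iff_eq_of_nrm2_sub_eq (hπ : IsUltrapower ω trM trN π) {a b c d : ℕ → M}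
    (ha : BddSeq a) (hb : BddSeq b) (hc : BddSeq c) (hd : BddSeq d)
    (h : ∀ n, nrm2 trM (a n - b n) = nrm2 trM (c n - d n)) : π a = π b ↔ π c = π d := by
  rw [hπ.eq_iff _ _ ha hb, hπ.eq_iff _ _ hc hd, funext h]

theorem map_conj_eq_of_commute (hπ : IsUltrapower ω trM trN π) {u : M} (hu : u ∈ unitary M)
    {z : ℕ → M} (hz : BddSeq z) (hcomm : uConst π u * π z = π z * uConst π u) :
    π (fun n => u * z n * star u) = π z := by
  rw [hπ.map_mul _ _ ((BddSeq.const u).mul hz) (BddSeq.const _),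
    hπ.map_mul _ _ (BddSeq.const u) hz]
  change uConst π u * π z * uConst π (star u) = π z
  rw [hcomm, mul_assoc, uConst, uConst, ← hπ.map_mul _ _ (BddSeq.const _) (BddSeq.const _),
    (Unitary.mem_iff.mp hu).2, hπ.map_one, mul_one]

end IsUltrapower

section Stabilizer

variable {R : Type*} [NormedRing R] [StarRing R] [CStarRing R] [NormedAlgebra ℂ R]
  [StarModule ℂ R] [CompleteSpace R]
variable {P : Type*} [NormedRing P] [StarRing P] [CStarRing P] [NormedAlgebra ℂ P]
  [StarModule ℂ P] [CompleteSpace P]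
variable {N : Type*} [NormedRing N] [StarRing N] [NormedAlgebra ℂ N]
variable {ω : Ultrafilter ℕ} {trR : R →ₗ[ℂ] ℂ} {trP : P →ₗ[ℂ] ℂ} {trN : N →ₗ[ℂ] ℂ}
  {π : (ℕ → P) → N} {θ : R →⋆ₐ[ℂ] P}

theorem BddSeq.map_aut {β : R ≃ₐ[ℂ] R} (hβ : β ∈ tracialStarAut trR) {x : ℕ → R}
    (hx : BddSeq x) : BddSeq (fun n => β (x n)) :=
  hx.map fun a => (β.norm_map_of_map_star hβ.1 a).le

theorem BddSeq.map_starAlgHom (θ : R →⋆ₐ[ℂ] P) {x : ℕ → R} (hx : BddSeq x) :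
    BddSeq (fun n => θ (x n)) :=
  hx.map θ.norm_apply_le

def FixesClass (π : (ℕ → P) → N) (θ : R →⋆ₐ[ℂ] P) (y : N) (β : R ≃ₐ[ℂ] R) : Prop :=
  ∀ x : ℕ → R, BddSeq x → π (fun n => θ (x n)) = y → π (fun n => θ (β (x n))) = y

theorem IsUltrapower.map_aut_eq_map_aut_iff (hπ : IsUltrapower ω trP trN π)
    (hθtr : ∀ r, trP (θ r) = trR r) {β : R ≃ₐ[ℂ] R} (hβ : β ∈ tracialStarAut trR)
    {a b : ℕ → R} (ha : BddSeq a) (hb : BddSeq b) :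
    π (fun n => θ (β (a n))) = π (fun n => θ (β (b n))) ↔
      π (fun n => θ (a n)) = π (fun n => θ (b n)) :=
  hπ.eq_iff_eq_of_nrm2_sub_eq ((ha.map_aut hβ).map_starAlgHom θ)
    ((hb.map_aut hβ).map_starAlgHom θ) (ha.map_starAlgHom θ) (hb.map_starAlgHom θ) fun n => by
      rw [← map_sub, ← map_sub, ← map_sub, nrm2_map θ (StarHomClass.map_star θ) hθtr,
        nrm2_map β hβ.1 hβ.2, nrm2_map θ (StarHomClass.map_star θ) hθtr]

theorem IsUltrapower.fixesClass_of_map_eq (hπ : IsUltrapower ω trP trN π)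
    (hθtr : ∀ r, trP (θ r) = trR r) {β : R ≃ₐ[ℂ] R} (hβ : β ∈ tracialStarAut trR) {y : N}
    {r : ℕ → R} (hr : BddSeq r) (hry : π (fun n => θ (r n)) = y)
    (hβry : π (fun n => θ (β (r n))) = y) : FixesClass π θ y β := fun _ hx hxy =>
  ((hπ.map_aut_eq_map_aut_iff hθtr hβ hx hr).2 (hxy.trans hry.symm)).trans hβry

def IsUltrapower.classStabilizer (hπ : IsUltrapower ω trP trN π)
    (hθtr : ∀ r, trP (θ r) = trR r) (y : N) : Subgroup (R ≃ₐ[ℂ] R) where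
  carrier := {β | β ∈ tracialStarAut trR ∧ FixesClass π θ y β}
  mul_mem' := by
    rintro β γ ⟨hβ, hβy⟩ ⟨hγ, hγy⟩
    exact ⟨mul_mem hβ hγ, fun x hx hxy => hβy _ (hx.map_aut hγ) (hγy x hx hxy)⟩
  one_mem' := ⟨one_mem _, fun _ _ hxy => hxy⟩
  inv_mem' := by
    rintro β ⟨hβ, hβy⟩
    refine ⟨inv_mem hβ, fun x hx hxy => ?_⟩
    -- `β x` and `β (β⁻¹ x) = x` both represent `y`, so `x` and `β⁻¹ x` represent the same class.
    have hx' : BddSeq (fun n => β⁻¹ (x n)) := hx.map_aut (inv_mem hβ)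
    have hββx : (fun n => θ (β (β⁻¹ (x n)))) = fun n => θ (x n) := by
      simp only [AlgEquiv.aut_inv, AlgEquiv.apply_symm_apply]
    have := (hπ.map_aut_eq_map_aut_iff hθtr hβ hx hx').1 (by rw [hββx, hβy x hx hxy, hxy])
    exact this.symm.trans hxy

end Stabilizer

theorem bisch_haagerup_central_sequences_are_G_fixed_general
    {R : Type*} [NormedRing R] [StarRing R] [CStarRing R] [NormedAlgebra ℂ R] [StarModule ℂ R] [CompleteSpace R]
    {P : Type*} [NormedRing P] [StarRing P] [CStarRing P] [NormedAlgebra ℂ P] [StarModule ℂ P] [CompleteSpace P]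
    {N : Type*} [NormedRing N] [StarRing N] [NormedAlgebra ℂ N]
    (trR : R →ₗ[ℂ] ℂ) (trP : P →ₗ[ℂ] ℂ) (trN : N →ₗ[ℂ] ℂ)
    {H K : Type*} [Group H] [Group K]
    -- outer actions of the finite groups `H` and `K` on `R`:
    (αH : H →* (R ≃ₐ[ℂ] R)) (αK : K →* (R ≃ₐ[ℂ] R))
    (hHstar : ∀ h (r : R), αH h (star r) = star (αH h r))
    (hKstar : ∀ k (r : R), αK k (star r) = star (αK k r))
    (hHtr : ∀ h (r : R), trR (αH h r) = trR r)
    (hKtr : ∀ k (r : R), trR (αK k r) = trR r)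
    -- the embedding of `R` into the crossed product `P = R ⋊ K`:
    (θ : R →⋆ₐ[ℂ] P) (hθinj : Function.Injective θ)
    (hθtr : ∀ r : R, trP (θ r) = trR r)
    (uK : K → P)
    (huni : ∀ k : K, uK k ∈ unitary P)
    (hcov : ∀ (k : K) (r : R), uK k * θ r * star (uK k) = θ (αK k r))
    (ω : Ultrafilter ℕ)
    (π : (ℕ → P) → N) (hπ : IsUltrapower ω trP trN π)
    :
    uSet π ((fun r : R => θ r) '' {r : R | ∀ h : H, αH h r = r}) ∩
        commutantSet (Set.range (uConst π)) ⊆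
      {y : N |
        y ∈ uSet π (Set.range (fun r : R => θ r)) ∧
        y ∈ commutantSet (uConst π '' Set.range (fun r : R => θ r)) ∧
        ∀ γ : R ≃ₐ[ℂ] R,
          (∃ β ∈ Subgroup.closure
              (Set.range (fun h : H => αH h) ∪ Set.range (fun k : K => αK k)),
            ∃ v ∈ unitary R, ∀ r : R, γ r = v * β r * star v) →
          ∀ x : ℕ → R, BddSeq (fun m => θ (x m)) → π (fun m => θ (x m)) = y →
            BddSeq (fun m => θ (γ (x m))) → π (fun m => θ (γ (x m))) = y} := by
  rintro y ⟨⟨x₀, hx₀, hx₀H, hy⟩, hcomm⟩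
  choose r hrH hrθ using hx₀H
  simp only [Set.mem_ofPred_eq] at hrH
  obtain rfl : x₀ = fun n => θ (r n) := funext fun n => (hrθ n).symm
  have hθ_norm a := (θ.norm_map_of_injective hθinj a).ge
  have hr : BddSeq r := BddSeq.of_map hθ_norm hx₀
  have hcommθ (p : P) : uConst π p * y = y * uConst π p := hcomm _ ⟨p, rfl⟩
  have hstab : Subgroup.closure (Set.range (fun h : H => αH h) ∪ Set.range (fun k : K => αK k))
      ≤ hπ.classStabilizer hθtr y := by
    rw [Subgroup.closure_le]
    rintro _ (⟨h, rfl⟩ | ⟨k, rfl⟩)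
    · have hαH : αH h ∈ tracialStarAut trR := ⟨hHstar h, hHtr h⟩
      refine ⟨hαH, hπ.fixesClass_of_map_eq hθtr hαH hr hy ?_⟩
      simpa only [hrH] using hy
    · have hαK : αK k ∈ tracialStarAut trR := ⟨hKstar k, hKtr k⟩
      refine ⟨hαK, hπ.fixesClass_of_map_eq hθtr hαK hr hy ?_⟩
      simp_rw [← hcov, ← hy]
      exact hπ.map_conj_eq_of_commute (huni k) hx₀ (hy ▸ hcommθ _)
  refine ⟨⟨_, hx₀, fun n => ⟨r n, rfl⟩, hy⟩, fun s hs => hcomm s (Set.image_subset_range _ _ hs),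
    ?_⟩
  rintro γ ⟨β, hβ, v, hv, hγ⟩ x hx hxy -
  have hβxy := (hstab hβ).2 x (BddSeq.of_map hθ_norm hx) hxy
  simp_rw [hγ, map_mul, map_star, ← hβxy]
  exact hπ.map_conj_eq_of_commute (Unitary.map_mem θ hv)
    ((BddSeq.of_map hθ_norm hx).map_aut (hstab hβ).1 |>.map_starAlgHom θ) (hβxy ▸ hcommθ _)

/-- Let `H` and `K` be finite groups with outer actions on the
hyperfinite II₁ factor `R`, and let `G = H ∗ K / (Int R ∩ H ∗ K)` be the image of
the free product in `Out R`.  Then for any free ultrafilter `ω`, the central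
sequence algebra `(R^H)^ω ∩ (R ⋊ K)'` of the Bisch–Haagerup subfactor
`R^H ⊂ R ⋊ K` is contained in `(R_ω)^G`, the fixed points of the induced pointwise
action of `G` on `R_ω` (i.e. fixed by the pointwise ultrapower of every
representative in `Aut R` of every element of `G`). -/
theorem bisch_haagerup_central_sequences_are_G_fixed
    {R : Type*} [NormedRing R] [StarRing R] [CStarRing R] [NormedAlgebra ℂ R] [StarModule ℂ R] [PartialOrder R] [StarOrderedRing R] [CompleteSpace R]
    {P : Type*} [NormedRing P] [StarRing P] [CStarRing P] [NormedAlgebra ℂ P] [StarModule ℂ P] [PartialOrder P] [StarOrderedRing P] [CompleteSpace P]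
    {N : Type*} [NormedRing N] [StarRing N] [CStarRing N] [NormedAlgebra ℂ N] [StarModule ℂ N] [PartialOrder N] [StarOrderedRing N] [CompleteSpace N]
    (trR : R →ₗ[ℂ] ℂ) (trP : P →ₗ[ℂ] ℂ) (trN : N →ₗ[ℂ] ℂ)
    -- `R` is the hyperfinite II₁ factor:
    (hR : IsII1Factor trR) (hRhyp : IsHyperfiniteSet trR (Set.univ : Set R))
    -- `P = R ⋊ K` is a II₁ factor:
    (hP : IsII1Factor trP)
    {H K : Type*} [Group H] [Fintype H] [Group K] [Fintype K]
    -- outer actions of the finite groups `H` and `K` on `R`: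
    (αH : H →* (R ≃ₐ[ℂ] R)) (αK : K →* (R ≃ₐ[ℂ] R))
    (hHstar : ∀ h (r : R), αH h (star r) = star (αH h r))
    (hKstar : ∀ k (r : R), αK k (star r) = star (αK k r))
    (hHtr : ∀ h (r : R), trR (αH h r) = trR r)
    (hKtr : ∀ k (r : R), trR (αK k r) = trR r)
    (hHouter : ∀ h : H, h ≠ 1 → ¬ ∃ u ∈ unitary R, ∀ r : R, αH h r = u * r * star u)
    (hKouter : ∀ k : K, k ≠ 1 → ¬ ∃ u ∈ unitary R, ∀ r : R, αK k r = u * r * star u)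
    -- the embedding of `R` into the crossed product `P = R ⋊ K`:
    (θ : R →⋆ₐ[ℂ] P) (hθinj : Function.Injective θ)
    (hθtr : ∀ r : R, trP (θ r) = trR r)
    (uK : K → P)
    (hu1 : uK 1 = 1) (humul : ∀ k l : K, uK (k * l) = uK k * uK l)
    (huni : ∀ k : K, uK k ∈ unitary P)
    (hcov : ∀ (k : K) (r : R), uK k * θ r * star (uK k) = θ (αK k r))
    (hgen : ∀ p : P, ∀ ε : ℝ, 0 < ε →
      ∃ y ∈ Submodule.span ℂ {z : P | ∃ r : R, ∃ k : K, z = θ r * uK k},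
        nrm2 trP (p - y) < ε)
    (htr0 : ∀ k : K, k ≠ 1 → ∀ r : R, trP (θ r * uK k) = 0)
    (ω : Ultrafilter ℕ) (hω : IsFreeUltrafilter ω)
    (π : (ℕ → P) → N) (hπ : IsUltrapower ω trP trN π)
    :
    uSet π ((fun r : R => θ r) '' {r : R | ∀ h : H, αH h r = r}) ∩
        commutantSet (Set.range (uConst π)) ⊆
      {y : N |
        y ∈ uSet π (Set.range (fun r : R => θ r)) ∧
        y ∈ commutantSet (uConst π '' Set.range (fun r : R => θ r)) ∧
        ∀ γ : R ≃ₐ[ℂ] R,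
          (∃ β ∈ Subgroup.closure
              (Set.range (fun h : H => αH h) ∪ Set.range (fun k : K => αK k)),
            ∃ v ∈ unitary R, ∀ r : R, γ r = v * β r * star v) →
          ∀ x : ℕ → R, BddSeq (fun m => θ (x m)) → π (fun m => θ (x m)) = y →
            BddSeq (fun m => θ (γ (x m))) → π (fun m => θ (γ (x m))) = y} :=
  bisch_haagerup_central_sequences_are_G_fixed_general trR trP trN αH αK hHstar hKstar hHtr hKtr θ
    hθinj hθtr uK huni hcov ω π hπ
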